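/- arXiv:2408.12206 — 6 statements merged into one kernel-verified Lean document; each statement's English description precedes it below -/
import Mathlib

section
/- Let R be a commutative ring, p a prime ideal of R, T an R-linear triangulated category, and T' a triangulated category that is linear over the localization R_p (hence R-linear via R → R_p). Let F : T ⥤ T' be an R-linear triangulated functor, and assume that for all objects A, B of T the map Hom_T(A,B)_p → Hom_{T'}(FA,FB) obtained by localizing the map induced by F at p is surjective. Then for every class 𝒳 of objects of T and every object Y lying in the thick closure of F(𝒳) in T', there exists an object X in the thick closure of 𝒳 in T such that Y is a direct summand of F(X); that is, the functor induced by F from the thick closure of 𝒳 to the thick closure of F(𝒳) is essentially dense. -/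
open CategoryTheory CategoryTheory.Limits CategoryTheory.Pretriangulated

/-- The thick closure of a class of objects `S` in a (pre)triangulated
category: the smallest class containing `S` that contains the zero objects and
is closed under isomorphisms, shifts in both directions, cones of morphisms
between its objects, and direct summands. -/
inductive ThickClosure {T : Type*} [Category T] [HasZeroObject T]
    [Preadditive T] [HasShift T ℤ] [∀ n : ℤ, (shiftFunctor T n).Additive]
    [Pretriangulated T] (S : Set T) : T → Prop
  | mem (X : T) : X ∈ S → ThickClosure S X
  | zero (X : T) : IsZero X → ThickClosure S X
  | iso (X Y : T) : (X ≅ Y) → ThickClosure S X → ThickClosure S Y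
  | shift (X : T) (n : ℤ) : ThickClosure S X → ThickClosure S (X⟦n⟧)
  | cone (Tr : Triangle T) : (Tr ∈ distTriang T) → ThickClosure S Tr.obj₁ →
      ThickClosure S Tr.obj₂ → ThickClosure S Tr.obj₃
  | summand (X Y : T) (ι : X ⟶ Y) (π : Y ⟶ X) : ι ≫ π = 𝟙 X →
      ThickClosure S Y → ThickClosure S X

/-- Let `R` be a commutative ring, `p` a prime ideal, `T` an
`R`-linear triangulated category, `T'` a triangulated category linear over
`R_p` (hence `R`-linear via `R → R_p`), and `F : T ⥤ T'` an `R`-linear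
triangulated functor such that for all `A B : T` the localization at `p` of
the induced map `Hom_T(A,B) → Hom_{T'}(FA,FB)` is surjective (equivalently,
elementwise: every `g : FA ⟶ FB` satisfies `s • g = F.map f` for some
`f : A ⟶ B` and `s ∉ p`). Then for every class `𝒳` of objects of `T`, every
object in the thick closure of `F(𝒳)` is a direct summand of `F(X)` for some
`X` in the thick closure of `𝒳`: the induced functor is essentially dense. -/
theorem stmt_2 (R : Type*) [CommRing R] (p : Ideal R) [p.IsPrime]
    (T : Type*) [Category T] [Preadditive T] [CategoryTheory.Linear R T]
    [HasZeroObject T] [HasShift T ℤ]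
    [∀ n : ℤ, (shiftFunctor T n).Additive]
    [∀ n : ℤ, Functor.Linear R (shiftFunctor T n)]
    [Pretriangulated T] [IsTriangulated T]
    (T' : Type*) [Category T'] [Preadditive T']
    [CategoryTheory.Linear (Localization.AtPrime p) T']
    [CategoryTheory.Linear R T']
    (hres : ∀ (r : R) (A B : T') (f : A ⟶ B),
      r • f = (algebraMap R (Localization.AtPrime p) r) • f)
    [HasZeroObject T'] [HasShift T' ℤ]
    [∀ n : ℤ, (shiftFunctor T' n).Additive]
    [∀ n : ℤ, Functor.Linear (Localization.AtPrime p) (shiftFunctor T' n)]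
    [Pretriangulated T'] [IsTriangulated T']
    (F : T ⥤ T') [F.Additive] [Functor.Linear R F] [F.CommShift ℤ]
    [F.IsTriangulated]
    (hsurj : ∀ (A B : T) (g : F.obj A ⟶ F.obj B),
      ∃ (f : A ⟶ B) (s : R), s ∉ p ∧ s • g = F.map f)
    (𝒳 : Set T) (Y : T') (hY : ThickClosure (F.obj '' 𝒳) Y) :
    ∃ X : T, ThickClosure 𝒳 X ∧
      ∃ (ι : Y ⟶ F.obj X) (π : F.obj X ⟶ Y), ι ≫ π = 𝟙 Y := by
  induction hY with
  | mem Y hYmem =>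
      obtain ⟨x, hx, rfl⟩ := hYmem
      exact ⟨x, ThickClosure.mem x hx, 𝟙 _, 𝟙 _, Category.id_comp _⟩
  | zero Y hYzero =>
      obtain ⟨Z, hZ⟩ := HasZeroObject.zero (C := T)
      exact ⟨Z, ThickClosure.zero Z hZ, 0, 0, hYzero.eq_of_src _ _⟩
  | iso Y₁ Y₂ e h ih =>
      obtain ⟨X, hX, ι, π, hιπ⟩ := ih
      refine ⟨X, hX, e.inv ≫ ι, π ≫ e.hom, ?_⟩
      rw [Category.assoc, ← Category.assoc ι, hιπ, Category.id_comp, e.inv_hom_id]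
  | shift Y n h ih =>
      obtain ⟨X, hX, ι, π, hιπ⟩ := ih
      refine ⟨X⟦n⟧, ThickClosure.shift X n hX,
        ι⟦n⟧' ≫ (F.commShiftIso n).inv.app X,
        (F.commShiftIso n).hom.app X ≫ π⟦n⟧', ?_⟩
      rw [Category.assoc, ← Category.assoc ((F.commShiftIso n).inv.app X),
        Iso.inv_hom_id_app, Category.id_comp, ← Functor.map_comp, hιπ,
        CategoryTheory.Functor.map_id]
  | summand A B i q hiq hB ih =>
      obtain ⟨X, hX, ι, π, hιπ⟩ := ih
      refine ⟨X, hX, i ≫ ι, π ≫ q, ?_⟩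
      rw [Category.assoc, ← Category.assoc ι, hιπ, Category.id_comp, hiq]
  | cone Tr hTr hc₁ hc₂ ih₁ ih₂ =>
      obtain ⟨X₁, hX₁, ι₁, π₁, h₁⟩ := ih₁
      obtain ⟨X₂, hX₂, ι₂, π₂, h₂⟩ := ih₂
      set g' : F.obj X₁ ⟶ F.obj X₂ := π₁ ≫ Tr.mor₁ ≫ ι₂ with hg'
      obtain ⟨f, s, hs, hsf⟩ := hsurj X₁ X₂ g'
      obtain ⟨Z', m₂, m₃, hT'⟩ := Pretriangulated.distinguished_cocone_triangle g'
      obtain ⟨Z, a, b, hZ⟩ := Pretriangulated.distinguished_cocone_triangle f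
      have hFZ : F.mapTriangle.obj (Triangle.mk f a b) ∈ distTriang T' :=
        F.map_distinguished _ hZ
      -- morphism Tr ⟶ (triangle of g')
      have comm1 : Tr.mor₁ ≫ ι₂ = ι₁ ≫ (Triangle.mk g' m₂ m₃).mor₁ := by
        show Tr.mor₁ ≫ ι₂ = ι₁ ≫ g'
        rw [hg', ← Category.assoc, ← Category.assoc, h₁, Category.id_comp]
      obtain ⟨c, hc, hc'⟩ := Pretriangulated.complete_distinguished_triangle_morphism
        Tr (Triangle.mk g' m₂ m₃) hTr hT' ι₁ ι₂ comm1
      -- morphism (triangle of g') ⟶ Tr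
      have comm2 : (Triangle.mk g' m₂ m₃).mor₁ ≫ π₂ = π₁ ≫ Tr.mor₁ := by
        show g' ≫ π₂ = π₁ ≫ Tr.mor₁
        rw [hg', Category.assoc, Category.assoc, h₂, Category.comp_id]
      obtain ⟨d, hd, hd'⟩ := Pretriangulated.complete_distinguished_triangle_morphism
        (Triangle.mk g' m₂ m₃) Tr hT' hTr π₁ π₂ comm2
      -- the composite endomorphism of Tr
      have φcomm₂ : Tr.mor₂ ≫ c ≫ d = 𝟙 _ ≫ Tr.mor₂ := by
        rw [← Category.assoc, hc]
        erw [Category.assoc, hd, ← Category.assoc]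
        erw [h₂,
          Category.id_comp]
      have φcomm₃ : Tr.mor₃ ≫ (𝟙 Tr.obj₁)⟦(1 : ℤ)⟧' = (c ≫ d) ≫ Tr.mor₃ := by
        rw [Category.assoc, ← hd', ← Category.assoc, ← hc', Category.assoc]
        erw [← Functor.map_comp, h₁]
      have hcd : IsIso (c ≫ d) := by
        have := Pretriangulated.isIso₃_of_isIso₁₂
          (Triangle.homMk Tr Tr (𝟙 _) (𝟙 _) (c ≫ d) (by simp) φcomm₂ φcomm₃)
          hTr hTr (by simp only [Triangle.homMk_hom₁]; infer_instance) (by simp only [Triangle.homMk_hom₂]; infer_instance)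
        exact this
      -- comparison between F-image triangle and the triangle of g'
      set u : Localization.AtPrime p := algebraMap R (Localization.AtPrime p) s with hu
      have hus : IsUnit u :=
        (IsLocalization.AtPrime.isUnit_to_map_iff (Localization.AtPrime p) p s).2 hs
      have hFf : F.map f = u • g' := by
        rw [← hsf, hres]
      have key : (F.mapTriangle.obj (Triangle.mk f a b)).mor₁ ≫ 𝟙 (F.obj X₂)
          = (u • 𝟙 (F.obj X₁)) ≫ (Triangle.mk g' m₂ m₃).mor₁ := by
        show F.map f ≫ 𝟙 (F.obj X₂) = (u • 𝟙 (F.obj X₁)) ≫ g'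
        rw [Category.comp_id, Linear.smul_comp, Category.id_comp, hFf]
      obtain ⟨e₃, he₃, he₃'⟩ := Pretriangulated.complete_distinguished_triangle_morphism
        (F.mapTriangle.obj (Triangle.mk f a b)) (Triangle.mk g' m₂ m₃) hFZ hT'
        (u • 𝟙 (F.obj X₁)) (𝟙 (F.obj X₂)) key
      have hu1 : IsIso (u • 𝟙 (F.obj X₁)) := by
        refine ⟨((hus.unit⁻¹ : (Localization.AtPrime p)ˣ) : Localization.AtPrime p)
          • 𝟙 (F.obj X₁), ?_, ?_⟩ <;>
        · rw [Linear.smul_comp, Linear.comp_smul, Category.id_comp, smul_smul]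
          simp [IsUnit.unit_spec]
      have he₃iso : IsIso e₃ := by
        have := Pretriangulated.isIso₃_of_isIso₁₂
          (Triangle.homMk (F.mapTriangle.obj (Triangle.mk f a b))
            (Triangle.mk g' m₂ m₃) (u • 𝟙 (F.obj X₁)) (𝟙 (F.obj X₂)) e₃
            key he₃ he₃')
          hFZ hT' (by exact hu1) (by exact (inferInstance : IsIso (𝟙 (F.obj X₂))))
        exact this
      refine ⟨Z, ThickClosure.cone (Triangle.mk f a b) hZ hX₁ hX₂,
        c ≫ @inv _ _ _ _ e₃ he₃iso, e₃ ≫ d ≫ inv (c ≫ d), ?_⟩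
      rw [Category.assoc]
      erw [IsIso.inv_hom_id_assoc]
      rw [← Category.assoc,
        IsIso.hom_inv_id]
end

section
/- Let R be a commutative ring, p a prime ideal of R, T an R-linear triangulated category, and T' a triangulated category that is linear over the localization R_p (hence R-linear via R → R_p). Let F : T ⥤ T' be an R-linear triangulated functor, and assume that for all objects A, B of T the map Hom_T(A,B)_p → Hom_{T'}(FA,FB) obtained by localizing the map induced by F at p is bijective. Let 𝒳 be a class of objects of T and let X be an object of T such that F(X) lies in the thick closure of F(𝒳) in T'. Then there exists s ∈ R \ p such that the morphism s • 𝟙_X factors in T through an object belonging to the thick closure of 𝒳 in T (equivalently, s • 𝟙_X becomes zero in the Verdier quotient of T by the thick closure of 𝒳). -/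
open CategoryTheory CategoryTheory.Limits CategoryTheory.Pretriangulated ZeroObject

set_option linter.unusedSectionVars false

section Aux

variable {R : Type*} [CommRing R] (p : Ideal R) [p.IsPrime]
    {T : Type*} [Category T] [Preadditive T] [CategoryTheory.Linear R T]
    [HasZeroObject T] [HasShift T ℤ]
    [∀ n : ℤ, (shiftFunctor T n).Additive]
    [Pretriangulated T] [IsTriangulated T]
    {T' : Type*} [Category T'] [Preadditive T']
    [CategoryTheory.Linear R T']
    [HasZeroObject T'] [HasShift T' ℤ]
    [∀ n : ℤ, (shiftFunctor T' n).Additive]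
    [Pretriangulated T']
    (hshiftsmul : ∀ (s : R) ⦃A B : T'⦄ (f : A ⟶ B) (n : ℤ), (s • f)⟦n⟧' = s • (f⟦n⟧'))
    (F : T ⥤ T') [F.Additive] [Functor.Linear R F] [F.CommShift ℤ]
    [F.IsTriangulated]
    (𝒳 : Set T)

include hshiftsmul in
/-- Shift stability of the key property. -/
lemma stmt3_shift (Y : T')
    (hY : ∀ (A : T) (u : F.obj A ⟶ Y), ∃ s : R, s ∉ p ∧ ∃ W : T,
      ThickClosure 𝒳 W ∧ ∃ (a : A ⟶ W) (k : F.obj W ⟶ Y), F.map a ≫ k = s • u)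
    (n : ℤ) (A : T) (u : F.obj A ⟶ (Y⟦n⟧)) :
    ∃ s : R, s ∉ p ∧ ∃ W : T, ThickClosure 𝒳 W ∧
      ∃ (a : A ⟶ W) (k : F.obj W ⟶ (Y⟦n⟧)), F.map a ≫ k = s • u := by
  have hnn : (-n) + n = 0 := neg_add_cancel n
  have hnn' : n + (-n) = 0 := add_neg_cancel n
  obtain ⟨s, hs, W, hW, a, k, hk⟩ := hY (A⟦(-n : ℤ)⟧)
    ((F.commShiftIso (-n)).hom.app A ≫ u⟦(-n : ℤ)⟧' ≫
      (shiftFunctorCompIsoId T' n (-n) hnn').hom.app Y)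
  refine ⟨s, hs, W⟦n⟧, ThickClosure.shift W n hW,
    (shiftFunctorCompIsoId T (-n) n hnn).inv.app A ≫ a⟦n⟧',
    (F.commShiftIso n).hom.app W ≫ k⟦n⟧', ?_⟩
  have nat : F.map (a⟦n⟧') ≫ (F.commShiftIso n).hom.app W =
      (F.commShiftIso n).hom.app (A⟦(-n : ℤ)⟧) ≫ (F.map a)⟦n⟧' :=
    (F.commShiftIso n).hom.naturality a
  rw [F.map_comp, Category.assoc, reassoc_of% nat, ← Functor.map_comp, hk]
  rw [hshiftsmul]
  rw [Functor.map_comp, Functor.map_comp, Linear.comp_smul, Linear.comp_smul]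
  congr 1
  have nat2 : (shiftFunctor T' n).map ((shiftFunctor T' (-n)).map u) ≫
      (shiftFunctorCompIsoId T' (-n) n hnn).hom.app (Y⟦n⟧) =
      (shiftFunctorCompIsoId T' (-n) n hnn).hom.app (F.obj A) ≫ u :=
    (shiftFunctorCompIsoId T' (-n) n hnn).hom.naturality u
  rw [Functor.map_shiftFunctorCompIsoId_inv_app]
  simp only [Category.assoc, Iso.inv_hom_id_app_assoc]
  rw [← Functor.map_comp_assoc, Iso.inv_hom_id_app]
  rw [show (𝟙 ((F ⋙ CategoryTheory.shiftFunctor T' (-n)).obj A)) =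
    𝟙 ((CategoryTheory.shiftFunctor T' (-n)).obj (F.obj A)) from rfl,
    CategoryTheory.Functor.map_id, Category.id_comp]
  rw [shift_shiftFunctorCompIsoId_hom_app]
  show (shiftFunctorCompIsoId T' (-n) n hnn).inv.app (F.obj A) ≫
      (shiftFunctor T' n).map ((shiftFunctor T' (-n)).map u) ≫
      (shiftFunctorCompIsoId T' (-n) n hnn).hom.app ((shiftFunctor T' n).obj Y) = u
  rw [nat2, Iso.inv_hom_id_app_assoc]

include hshiftsmul in
lemma stmt3_main
    (hsurj : ∀ (A B : T) (g : F.obj A ⟶ F.obj B),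
      ∃ (f : A ⟶ B) (s : R), s ∉ p ∧ s • g = F.map f)
    (Y : T') (hY : ThickClosure (F.obj '' 𝒳) Y) :
    ∀ (A : T) (u : F.obj A ⟶ Y), ∃ s : R, s ∉ p ∧ ∃ W : T,
      ThickClosure 𝒳 W ∧ ∃ (a : A ⟶ W) (k : F.obj W ⟶ Y), F.map a ≫ k = s • u := by
  induction hY with
  | mem Y hmem =>
    obtain ⟨Z, hZ, rfl⟩ := hmem
    intro A u
    obtain ⟨f, s, hs, hsf⟩ := hsurj A Z u
    exact ⟨s, hs, Z, ThickClosure.mem Z hZ, f, 𝟙 _, by rw [Category.comp_id, hsf]⟩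
  | zero Y hzero =>
    intro A u
    refine ⟨1, fun h => (inferInstance : p.IsPrime).ne_top ((Ideal.eq_top_iff_one p).mpr h),
      0, ThickClosure.zero 0 (isZero_zero T), 0, 0, ?_⟩
    rw [hzero.eq_of_tgt u 0]
    simp
  | iso Y₁ Y₂ e _ ih =>
    intro A u
    obtain ⟨s, hs, W, hW, a, k, hk⟩ := ih A (u ≫ e.inv)
    refine ⟨s, hs, W, hW, a, k ≫ e.hom, ?_⟩
    rw [← Category.assoc, hk, Linear.smul_comp, Category.assoc, e.inv_hom_id, Category.comp_id]
  | shift Y n _ ih =>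
    exact stmt3_shift p hshiftsmul F 𝒳 Y ih n
  | cone Tr hTr _ _ ih₁ ih₂ =>
    intro A u
    -- Step 1: control `u ≫ Tr.mor₃` through `Tr.obj₁⟦1⟧`
    obtain ⟨s₁, hs₁, W₁, hW₁, a₁, k₁, e₁⟩ :=
      stmt3_shift p hshiftsmul F 𝒳 Tr.obj₁ ih₁ 1 A (u ≫ Tr.mor₃)
    -- Step 2: cone of a₁ in T
    obtain ⟨C, e, δ, hC⟩ := distinguished_cocone_triangle a₁
    have hT₁ : (Triangle.mk a₁ e δ).invRotate ∈ distTriang T := inv_rot_of_distTriang _ hC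
    set T₁ := (Triangle.mk a₁ e δ).invRotate with hT₁def
    have hzero : (F.map T₁.mor₁ ≫ (s₁ • u)) ≫ Tr.mor₃ = 0 := by
      erw [Category.assoc, Linear.smul_comp, ← e₁, ← Category.assoc, ← F.map_comp]
      have h0 : T₁.mor₁ ≫ a₁ = 0 := comp_distTriang_mor_zero₁₂ T₁ hT₁
      rw [show (T₁.mor₁ ≫ a₁ : T₁.obj₁ ⟶ W₁) = 0 from h0, F.map_zero, zero_comp]
    obtain ⟨w, hw⟩ := Triangle.coyoneda_exact₃ Tr hTr (F.map T₁.mor₁ ≫ (s₁ • u)) hzero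
    -- Step 3: control w through Tr.obj₂
    obtain ⟨s₂, hs₂, W₂, hW₂, a₂, k₂, e₂⟩ := ih₂ T₁.obj₁ w
    -- Step 4: octahedron
    have hbi : Triangle.mk (biprod.inr : W₂ ⟶ A ⊞ W₂) biprod.fst
        (0 : A ⟶ W₂⟦(1 : ℤ)⟧) ∈ distTriang T := by
      refine isomorphic_distinguished _ (binaryBiproductTriangle_distinguished W₂ A) _ ?_
      refine Triangle.isoMk _ _ (Iso.refl _) (biprod.braiding A W₂) (Iso.refl _) ?_ ?_ ?_
      · apply biprod.hom_ext
        · show ((biprod.inr : W₂ ⟶ A ⊞ W₂) ≫ biprod.lift biprod.snd biprod.fst) ≫ (biprod.fst : W₂ ⊞ A ⟶ W₂) = (𝟙 W₂ ≫ biprod.inl) ≫ biprod.fst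
          simp
        · show ((biprod.inr : W₂ ⟶ A ⊞ W₂) ≫ biprod.lift biprod.snd biprod.fst) ≫ (biprod.snd : W₂ ⊞ A ⟶ A) = (𝟙 W₂ ≫ biprod.inl) ≫ biprod.snd
          simp
      · exact (Category.comp_id _).trans (biprod.lift_snd _ _).symm
      · exact zero_comp.trans comp_zero.symm
    have hrot := rot_of_distTriang _ hbi
    set φ : T₁.obj₁ ⟶ A ⊞ W₂ := biprod.lift (T₁.mor₁ : T₁.obj₁ ⟶ A) a₂ with hφdef
    obtain ⟨A', ι, π, hA'tri⟩ := distinguished_cocone_triangle φ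
    have hcomm : φ ≫ (biprod.fst : A ⊞ W₂ ⟶ A) = (T₁.mor₁ : T₁.obj₁ ⟶ A) := biprod.lift_fst _ _
    have oct := Triangulated.someOctahedron hcomm hA'tri hrot hT₁
    -- A' belongs to the thick closure
    have hA' : ThickClosure 𝒳 A' := by
      have h3 := rot_of_distTriang _ oct.mem
      have h4 := ThickClosure.cone _ h3 hW₁ (ThickClosure.shift W₂ 1 hW₂)
      have h5 := ThickClosure.shift _ (-1 : ℤ) h4
      exact ThickClosure.iso _ _ ((shiftFunctorCompIsoId T (1 : ℤ) (-1) (by omega)).app A') h5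
    -- Step 5: factor s₂ • s₁ • u through F.obj A'
    have hfac : F.map φ ≫ (F.map (biprod.fst : A ⊞ W₂ ⟶ A) ≫ (s₂ • s₁ • u)
        - F.map (biprod.snd : A ⊞ W₂ ⟶ W₂) ≫ (k₂ ≫ Tr.mor₂)) = 0 := by
      erw [Preadditive.comp_sub, ← F.map_comp_assoc, ← F.map_comp_assoc, hφdef,
        biprod.lift_fst, biprod.lift_snd, Linear.comp_smul, hw, reassoc_of% e₂,
        Linear.smul_comp, sub_self]
    have hFtri := F.map_distinguished _ hA'tri
    obtain ⟨ψ, hψ⟩ := Triangle.yoneda_exact₂ _ hFtri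
      (F.map (biprod.fst : A ⊞ W₂ ⟶ A) ≫ (s₂ • s₁ • u)
        - F.map (biprod.snd : A ⊞ W₂ ⟶ W₂) ≫ (k₂ ≫ Tr.mor₂)) hfac
    have hψ' : F.map (biprod.fst : A ⊞ W₂ ⟶ A) ≫ (s₂ • s₁ • u)
        - F.map (biprod.snd : A ⊞ W₂ ⟶ W₂) ≫ (k₂ ≫ Tr.mor₂) = F.map ι ≫ ψ := hψ
    refine ⟨s₂ * s₁, fun h => ((inferInstance : p.IsPrime).mem_or_mem h).elim hs₂ hs₁,
      A', hA', biprod.inl ≫ ι, ψ, ?_⟩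
    erw [F.map_comp, Category.assoc, ← hψ', Preadditive.comp_sub, ← F.map_comp_assoc,
      ← F.map_comp_assoc, biprod.inl_fst, biprod.inl_snd, CategoryTheory.Functor.map_id,
      Category.id_comp, F.map_zero, zero_comp, sub_zero, mul_smul]
  | summand Y₁ Y₂ i q hiq _ ih =>
    intro A u
    obtain ⟨s, hs, W, hW, a, k, hk⟩ := ih A (u ≫ i)
    refine ⟨s, hs, W, hW, a, k ≫ q, ?_⟩
    rw [← Category.assoc, hk, Linear.smul_comp, Category.assoc, hiq, Category.comp_id]

end Aux

/-- Let `R` be a commutative ring, `p` a prime ideal, `T` an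
`R`-linear triangulated category, `T'` a triangulated category linear over
`R_p` (hence `R`-linear via `R → R_p`), and `F : T ⥤ T'` an `R`-linear
triangulated functor such that for all `A B : T` the localization at `p` of
the induced map `Hom_T(A,B) → Hom_{T'}(FA,FB)` is bijective (elementwise:
surjective as in the previous statement, and injective in the sense that
`F.map f = 0` forces `s • f = 0` for some `s ∉ p`). If `𝒳` is a class of
objects of `T` and `X : T` is such that `F(X)` lies in the thick closure of
`F(𝒳)`, then there exists `s ∈ R \ p` such that `s • 𝟙 X` factors through an
object of the thick closure of `𝒳` (equivalently, `s • 𝟙 X` becomes zero in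
the Verdier quotient of `T` by the thick closure of `𝒳`). -/
theorem stmt_3 (R : Type*) [CommRing R] (p : Ideal R) [p.IsPrime]
    (T : Type*) [Category T] [Preadditive T] [CategoryTheory.Linear R T]
    [HasZeroObject T] [HasShift T ℤ]
    [∀ n : ℤ, (shiftFunctor T n).Additive]
    [∀ n : ℤ, Functor.Linear R (shiftFunctor T n)]
    [Pretriangulated T] [IsTriangulated T]
    (T' : Type*) [Category T'] [Preadditive T']
    [CategoryTheory.Linear (Localization.AtPrime p) T']
    [CategoryTheory.Linear R T']
    (hres : ∀ (r : R) (A B : T') (f : A ⟶ B),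
      r • f = (algebraMap R (Localization.AtPrime p) r) • f)
    [HasZeroObject T'] [HasShift T' ℤ]
    [∀ n : ℤ, (shiftFunctor T' n).Additive]
    [∀ n : ℤ, Functor.Linear (Localization.AtPrime p) (shiftFunctor T' n)]
    [Pretriangulated T'] [IsTriangulated T']
    (F : T ⥤ T') [F.Additive] [Functor.Linear R F] [F.CommShift ℤ]
    [F.IsTriangulated]
    (hsurj : ∀ (A B : T) (g : F.obj A ⟶ F.obj B),
      ∃ (f : A ⟶ B) (s : R), s ∉ p ∧ s • g = F.map f)
    (hinj : ∀ (A B : T) (f : A ⟶ B), F.map f = 0 → ∃ s : R, s ∉ p ∧ s • f = 0)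
    (𝒳 : Set T) (X : T) (hX : ThickClosure (F.obj '' 𝒳) (F.obj X)) :
    ∃ s : R, s ∉ p ∧ ∃ W : T, ThickClosure 𝒳 W ∧
      ∃ (a : X ⟶ W) (b : W ⟶ X), a ≫ b = s • 𝟙 X := by
  have hshiftsmul : ∀ (s : R) ⦃A B : T'⦄ (f : A ⟶ B) (n : ℤ),
      (s • f)⟦n⟧' = s • (f⟦n⟧') := by
    intro s A B f n
    rw [hres s _ _ f, Functor.map_smul, ← hres]
  obtain ⟨s, hs, W, hW, a, k, hk⟩ := stmt3_main p hshiftsmul F 𝒳 hsurj (F.obj X) hX X (𝟙 _)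
  obtain ⟨b, t, ht, htb⟩ := hsurj W X k
  have hzero : F.map (a ≫ b - (t * s) • 𝟙 X) = 0 := by
    rw [F.map_sub, sub_eq_zero, F.map_comp, ← htb, Linear.comp_smul, hk, smul_smul,
      Functor.map_smul, CategoryTheory.Functor.map_id]
  obtain ⟨r, hr, hr0⟩ := hinj _ _ _ hzero
  have h2 : r • (a ≫ b) = (r * (t * s)) • 𝟙 X := by
    have h3 := sub_eq_zero.mp (by rwa [smul_sub] at hr0)
    rw [h3, smul_smul]
  refine ⟨r * (t * s), fun h => ((inferInstance : p.IsPrime).mem_or_mem h).elim hr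
      (fun h' => ((inferInstance : p.IsPrime).mem_or_mem h').elim ht hs),
    W, hW, r • a, b, ?_⟩
  rw [Linear.smul_comp, h2]
end

section
/- Let k be a field, A = k[[X,Y,Z,W]] the formal power series ring in four variables over k, and R = A/I where I is the ideal generated by {X²Z, X²W, YZ, YW}. Then the image of X − Z in R is a regular element (nonzerodivisor) of R. -/
open MvPowerSeries Finsupp

namespace Stmt7Aux

variable {k : Type} [Field k]

/-- coefficient of `f * X s`. -/
lemma coeff_mul_Xs (f : MvPowerSeries (Fin 4) k) (s : Fin 4) (m : Fin 4 →₀ ℕ) :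
    coeff m (f * X s) =
      if 1 ≤ m s then coeff (m - single s 1) f else 0 := by
  rw [show (X s : MvPowerSeries (Fin 4) k) = monomial (single s 1) 1 by
        rw [← pow_one (X s), X_pow_eq],
    coeff_mul_monomial]
  simp [Finsupp.single_le_iff]

/-- The "uncovered monomials" vanishing ideal. -/
def J (k : Type) [Field k] : Ideal (MvPowerSeries (Fin 4) k) where
  carrier := {g | ∀ m : Fin 4 →₀ ℕ, ((m 0 ≤ 1 ∧ m 1 = 0) ∨ (m 2 = 0 ∧ m 3 = 0)) →
    coeff m g = 0}
  add_mem' := by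
    intro a b ha hb m hm
    rw [map_add, ha m hm, hb m hm, add_zero]
  zero_mem' := by intro m hm; simp
  smul_mem' := by
    classical
    intro c g hg m hm
    rw [smul_eq_mul, coeff_mul]
    refine Finset.sum_eq_zero fun p hp => ?_
    replace hp : p.1 + p.2 = m := by simpa using hp
    have hle : p.2 ≤ m := hp ▸ le_add_self
    rw [hg p.2 ?_, mul_zero]
    rcases hm with ⟨h0, h1⟩ | ⟨h2, h3⟩
    · exact Or.inl ⟨le_trans (hle 0) h0, Nat.le_zero.mp (h1 ▸ hle 1)⟩
    · exact Or.inr ⟨Nat.le_zero.mp (h2 ▸ hle 2), Nat.le_zero.mp (h3 ▸ hle 3)⟩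

lemma gen_eq (s t : Fin 4) (a b : ℕ) :
    (X s : MvPowerSeries (Fin 4) k) ^ a * (X t) ^ b
      = monomial (single s a + single t b) 1 := by
  rw [X_pow_eq, X_pow_eq, monomial_mul_monomial, one_mul]

/-- The part of `f` supported on monomials that are multiples of `e` satisfying `Q`,
divided by `e`. -/
noncomputable def part (f : MvPowerSeries (Fin 4) k) (e : Fin 4 →₀ ℕ)
    (Q : (Fin 4 →₀ ℕ) → Prop) [DecidablePred Q] : MvPowerSeries (Fin 4) k :=
  fun m => if Q (m + e) then coeff (m + e) f else 0

lemma coeff_part (f : MvPowerSeries (Fin 4) k) (e d : Fin 4 →₀ ℕ)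
    (Q : (Fin 4 →₀ ℕ) → Prop) [DecidablePred Q] :
    coeff d (part f e Q) = if Q (d + e) then coeff (d + e) f else 0 := rfl

lemma coeff_monomial_mul_part (f : MvPowerSeries (Fin 4) k) (e : Fin 4 →₀ ℕ)
    (Q : (Fin 4 →₀ ℕ) → Prop) [DecidablePred Q] (hQ : ∀ m, Q m → e ≤ m)
    (m : Fin 4 →₀ ℕ) :
    coeff m (monomial e 1 * part f e Q) = if Q m then coeff m f else 0 := by
  rw [coeff_monomial_mul]
  by_cases h : e ≤ m
  · rw [if_pos h, one_mul, coeff_part, tsub_add_cancel_of_le h]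
  · rw [if_neg h, if_neg (fun hq => h (hQ m hq))]

lemma apply_add_single (m : Fin 4 →₀ ℕ) (s t : Fin 4) (a : ℕ) :
    (m + single s a) t = m t + if s = t then a else 0 := by
  simp [Finsupp.add_apply, Finsupp.single_apply]

lemma key (f : MvPowerSeries (Fin 4) k)
    (hf : f * (X 0 - X 2) ∈
      Ideal.span {(X 0 : MvPowerSeries (Fin 4) k) ^ 2 * X 2, X 0 ^ 2 * X 3,
        X 1 * X 2, X 1 * X 3}) :
    f ∈ Ideal.span {(X 0 : MvPowerSeries (Fin 4) k) ^ 2 * X 2, X 0 ^ 2 * X 3,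
        X 1 * X 2, X 1 * X 3} := by
  classical
  have e1 : (X 0 : MvPowerSeries (Fin 4) k) ^ 2 * X 2
      = monomial (single 0 2 + single 2 1) 1 := by
    rw [← pow_one (X 2)]; exact gen_eq 0 2 2 1
  have e2 : (X 0 : MvPowerSeries (Fin 4) k) ^ 2 * X 3
      = monomial (single 0 2 + single 3 1) 1 := by
    rw [← pow_one (X 3)]; exact gen_eq 0 3 2 1
  have e3 : (X 1 : MvPowerSeries (Fin 4) k) * X 2
      = monomial ((single 1 1 : Fin 4 →₀ ℕ) + single 2 1) 1 := by
    rw [← pow_one (X 1), ← pow_one (X 2)]; exact gen_eq 1 2 1 1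
  have e4 : (X 1 : MvPowerSeries (Fin 4) k) * X 3
      = monomial ((single 1 1 : Fin 4 →₀ ℕ) + single 3 1) 1 := by
    rw [← pow_one (X 1), ← pow_one (X 3)]; exact gen_eq 1 3 1 1
  rw [e1, e2, e3, e4] at hf ⊢
  -- Step 1: the span lies inside J, so coefficients of f*(X-Z) vanish on U.
  have hspan : Ideal.span {monomial ((single 0 2 : Fin 4 →₀ ℕ) + single 2 1) 1,
      monomial ((single 0 2 : Fin 4 →₀ ℕ) + single 3 1) 1,
      monomial ((single 1 1 : Fin 4 →₀ ℕ) + single 2 1) 1,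
      monomial ((single 1 1 : Fin 4 →₀ ℕ) + single 3 1) 1} ≤ J k := by
    rw [Ideal.span_le]
    rintro g (rfl | rfl | rfl | rfl) <;>
    · intro m hm
      rw [coeff_monomial]
      split
      · next heq =>
        exfalso
        subst heq
        simp [Finsupp.add_apply, Finsupp.single_apply] at hm
      · rfl
  have hU : ∀ m : Fin 4 →₀ ℕ, ((m 0 ≤ 1 ∧ m 1 = 0) ∨ (m 2 = 0 ∧ m 3 = 0)) →
      coeff m (f * (X 0 - X 2)) = 0 := hspan hf
  have hstep : ∀ m : Fin 4 →₀ ℕ, ((m 0 ≤ 1 ∧ m 1 = 0) ∨ (m 2 = 0 ∧ m 3 = 0)) →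
      (if 1 ≤ m 0 then coeff (m - single 0 1) f else 0)
        = (if 1 ≤ m 2 then coeff (m - single 2 1) f else 0) := by
    intro m hm
    have h := hU m hm
    rw [mul_sub, map_sub, coeff_mul_Xs, coeff_mul_Xs, sub_eq_zero] at h
    exact h
  -- Step 2: coefficients of f vanish on U.
  have h00 : ∀ m : Fin 4 →₀ ℕ, m 0 = 0 → m 1 = 0 → coeff m f = 0 := by
    intro m h0 h1
    have a0 : ((m + single 2 1 : Fin 4 →₀ ℕ)) 0 = m 0 := by simp [apply_add_single]
    have a1 : ((m + single 2 1 : Fin 4 →₀ ℕ)) 1 = m 1 := by simp [apply_add_single]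
    have a2 : ((m + single 2 1 : Fin 4 →₀ ℕ)) 2 = m 2 + 1 := by simp [apply_add_single]
    have h := hstep (m + single 2 1) (Or.inl ⟨by omega, by omega⟩)
    rw [if_neg (by omega), if_pos (by omega), add_tsub_cancel_right] at h
    exact h.symm
  have hU1 : ∀ m : Fin 4 →₀ ℕ, m 0 ≤ 1 → m 1 = 0 → coeff m f = 0 := by
    intro m h0 h1
    rcases Nat.le_one_iff_eq_zero_or_eq_one.mp h0 with h0' | h0'
    · exact h00 m h0' h1
    · have a0 : ((m + single 2 1 : Fin 4 →₀ ℕ)) 0 = m 0 := by simp [apply_add_single]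
      have a1 : ((m + single 2 1 : Fin 4 →₀ ℕ)) 1 = m 1 := by simp [apply_add_single]
      have a2 : ((m + single 2 1 : Fin 4 →₀ ℕ)) 2 = m 2 + 1 := by simp [apply_add_single]
      have h := hstep (m + single 2 1) (Or.inl ⟨by omega, by omega⟩)
      rw [if_pos (by omega), if_pos (by omega), add_tsub_cancel_right] at h
      rw [← h]
      have b0 : ((m + single 2 1 - single 0 1 : Fin 4 →₀ ℕ)) 0 = ((m + single 2 1 : Fin 4 →₀ ℕ)) 0 - 1 := by
        rw [Finsupp.tsub_apply]; simp
      have b1 : ((m + single 2 1 - single 0 1 : Fin 4 →₀ ℕ)) 1 = ((m + single 2 1 : Fin 4 →₀ ℕ)) 1 := by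
        rw [Finsupp.tsub_apply]; simp
      exact h00 _ (by omega) (by omega)
  have hU2 : ∀ m : Fin 4 →₀ ℕ, m 2 = 0 → m 3 = 0 → coeff m f = 0 := by
    intro m h2 h3
    have a0 : ((m + single 0 1 : Fin 4 →₀ ℕ)) 0 = m 0 + 1 := by simp [apply_add_single]
    have a2 : ((m + single 0 1 : Fin 4 →₀ ℕ)) 2 = m 2 := by simp [apply_add_single]
    have a3 : ((m + single 0 1 : Fin 4 →₀ ℕ)) 3 = m 3 := by simp [apply_add_single]
    have h := hstep (m + single 0 1) (Or.inr ⟨by omega, by omega⟩)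
    rw [if_pos (by omega), if_neg (by omega), add_tsub_cancel_right] at h
    exact h
  have hv : ∀ m : Fin 4 →₀ ℕ, ((m 0 ≤ 1 ∧ m 1 = 0) ∨ (m 2 = 0 ∧ m 3 = 0)) →
      coeff m f = 0 := by
    rintro m (⟨h0, h1⟩ | ⟨h2, h3⟩)
    · exact hU1 m h0 h1
    · exact hU2 m h2 h3
  -- Step 3: explicit decomposition of f.
  have hQAle : ∀ m : Fin 4 →₀ ℕ, (1 ≤ m 1 ∧ 1 ≤ m 2) →
      ((single 1 1 : Fin 4 →₀ ℕ) + single 2 1) ≤ m := by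
    intro m hm
    rw [Finsupp.le_def]
    intro i
    fin_cases i <;> simp [Finsupp.add_apply, Finsupp.single_apply] <;> omega
  have hQBle : ∀ m : Fin 4 →₀ ℕ, (m 1 = 0 ∧ 2 ≤ m 0 ∧ 1 ≤ m 2) →
      ((single 0 2 : Fin 4 →₀ ℕ) + single 2 1) ≤ m := by
    intro m hm
    rw [Finsupp.le_def]
    intro i
    fin_cases i <;> simp [Finsupp.add_apply, Finsupp.single_apply] <;> omega
  have hQCle : ∀ m : Fin 4 →₀ ℕ, (1 ≤ m 1 ∧ m 2 = 0 ∧ 1 ≤ m 3) →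
      ((single 1 1 : Fin 4 →₀ ℕ) + single 3 1) ≤ m := by
    intro m hm
    rw [Finsupp.le_def]
    intro i
    fin_cases i <;> simp [Finsupp.add_apply, Finsupp.single_apply] <;> omega
  have hQDle : ∀ m : Fin 4 →₀ ℕ, (m 1 = 0 ∧ 2 ≤ m 0 ∧ m 2 = 0 ∧ 1 ≤ m 3) →
      ((single 0 2 : Fin 4 →₀ ℕ) + single 3 1) ≤ m := by
    intro m hm
    rw [Finsupp.le_def]
    intro i
    fin_cases i <;> simp [Finsupp.add_apply, Finsupp.single_apply] <;> omega
  have hdecomp : f =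
      monomial ((single 1 1 : Fin 4 →₀ ℕ) + single 2 1) 1
        * part f ((single 1 1 : Fin 4 →₀ ℕ) + single 2 1) (fun m => 1 ≤ m 1 ∧ 1 ≤ m 2)
      + monomial ((single 0 2 : Fin 4 →₀ ℕ) + single 2 1) 1
        * part f ((single 0 2 : Fin 4 →₀ ℕ) + single 2 1) (fun m => m 1 = 0 ∧ 2 ≤ m 0 ∧ 1 ≤ m 2)
      + monomial ((single 1 1 : Fin 4 →₀ ℕ) + single 3 1) 1
        * part f ((single 1 1 : Fin 4 →₀ ℕ) + single 3 1) (fun m => 1 ≤ m 1 ∧ m 2 = 0 ∧ 1 ≤ m 3)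
      + monomial ((single 0 2 : Fin 4 →₀ ℕ) + single 3 1) 1
        * part f ((single 0 2 : Fin 4 →₀ ℕ) + single 3 1) (fun m => m 1 = 0 ∧ 2 ≤ m 0 ∧ m 2 = 0 ∧ 1 ≤ m 3) := by
    apply MvPowerSeries.ext
    intro m
    rw [map_add, map_add, map_add,
      coeff_monomial_mul_part f _ _ hQAle, coeff_monomial_mul_part f _ _ hQBle,
      coeff_monomial_mul_part f _ _ hQCle, coeff_monomial_mul_part f _ _ hQDle]
    split_ifs <;>
      first
        | ring1
        | (exfalso; omega)
        | (rw [hv m (by omega)]; ring1)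
  rw [hdecomp]
  refine Ideal.add_mem _ (Ideal.add_mem _ (Ideal.add_mem _ ?_ ?_) ?_) ?_ <;>
    exact Ideal.mul_mem_right _ _ (Ideal.subset_span (by simp))

end Stmt7Aux

/-- In `R = k[[X,Y,Z,W]]/(X²Z, X²W, YZ, YW)`, the image of `X - Z`
is a nonzerodivisor. -/
theorem stmt_7 (k : Type) [Field k] :
    let A := MvPowerSeries (Fin 4) k
    let X : A := MvPowerSeries.X 0
    let Y : A := MvPowerSeries.X 1
    let Z : A := MvPowerSeries.X 2
    let W : A := MvPowerSeries.X 3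
    let I : Ideal A := Ideal.span {X ^ 2 * Z, X ^ 2 * W, Y * Z, Y * W}
    Ideal.Quotient.mk I (X - Z) ∈ nonZeroDivisors (A ⧸ I) := by
  intro A X Y Z W I
  rw [mem_nonZeroDivisors_iff_right]
  intro x hx
  obtain ⟨f, rfl⟩ := Ideal.Quotient.mk_surjective x
  rw [← map_mul, Ideal.Quotient.eq_zero_iff_mem] at hx
  rw [Ideal.Quotient.eq_zero_iff_mem]
  exact Stmt7Aux.key f hx
end

section
/- Let k be a field, A = k[[X,Y,Z,W]] the formal power series ring in four variables over k, and J the ideal of A generated by {X²Z, X²W, YZ, YW, X − Z}. Then Z² ∉ J, while Z² belongs to the colon ideal (J : (X,Y,Z,W)), i.e., X·Z², Y·Z², Z·Z², W·Z² ∈ J. Consequently the quotient A/J, which equals R/(x−z) for R = A/(X²Z,X²W,YZ,YW), has a nonzero socle and hence depth zero, so that R has depth one. -/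
open MvPowerSeries Finsupp

private lemma aux_coeff_zero {k : Type} [Field k] {m n : Fin 4 →₀ ℕ}
    (r : MvPowerSeries (Fin 4) k) (h : ¬ n ≤ m) :
    MvPowerSeries.coeff m (r * MvPowerSeries.monomial n 1) = 0 := by
  rw [MvPowerSeries.coeff_mul_monomial, if_neg h]

private lemma aux_coeff_pos {k : Type} [Field k] {m n : Fin 4 →₀ ℕ}
    (r : MvPowerSeries (Fin 4) k) (h : n ≤ m) :
    MvPowerSeries.coeff m (r * MvPowerSeries.monomial n 1) =
      MvPowerSeries.coeff (m - n) r := by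
  rw [MvPowerSeries.coeff_mul_monomial, if_pos h, mul_one]

private lemma aux_not_le {n m : Fin 4 →₀ ℕ} (i : Fin 4) (h : m i < n i) : ¬ n ≤ m :=
  fun hle => absurd (Finsupp.le_def.mp hle i) (not_le.mpr h)

/-- In `A = k[[X,Y,Z,W]]` with
`J = (X²Z, X²W, YZ, YW, X - Z)`, one has `Z² ∉ J` while
`Z² ∈ (J : (X,Y,Z,W))`, i.e. `X·Z², Y·Z², Z·Z², W·Z² ∈ J`. -/
theorem stmt_8 (k : Type) [Field k] :
    let A := MvPowerSeries (Fin 4) k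
    let X : A := MvPowerSeries.X 0
    let Y : A := MvPowerSeries.X 1
    let Z : A := MvPowerSeries.X 2
    let W : A := MvPowerSeries.X 3
    let J : Ideal A := Ideal.span {X ^ 2 * Z, X ^ 2 * W, Y * Z, Y * W, X - Z}
    Z ^ 2 ∉ J ∧
      Z ^ 2 ∈ Submodule.colon J (Ideal.span {X, Y, Z, W}) ∧
      X * Z ^ 2 ∈ J ∧ Y * Z ^ 2 ∈ J ∧ Z * Z ^ 2 ∈ J ∧ W * Z ^ 2 ∈ J := by
  intro A X Y Z W J
  have hg1 : X ^ 2 * Z ∈ J := Ideal.subset_span (by simp)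
  have hg2 : X ^ 2 * W ∈ J := Ideal.subset_span (by simp)
  have hg3 : Y * Z ∈ J := Ideal.subset_span (by simp)
  have hg5 : X - Z ∈ J := Ideal.subset_span (by simp)
  have hXZ2 : X * Z ^ 2 ∈ J := by
    have h : X * Z ^ 2 = X ^ 2 * Z - X * Z * (X - Z) := by ring
    rw [h]; exact J.sub_mem hg1 (J.mul_mem_left _ hg5)
  have hYZ2 : Y * Z ^ 2 ∈ J := by
    have h : Y * Z ^ 2 = Z * (Y * Z) := by ring
    rw [h]; exact J.mul_mem_left _ hg3
  have hZZ2 : Z * Z ^ 2 ∈ J := by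
    have h : Z * Z ^ 2 = X ^ 2 * Z - (X + Z) * Z * (X - Z) := by ring
    rw [h]; exact J.sub_mem hg1 (J.mul_mem_left _ hg5)
  have hWZ2 : W * Z ^ 2 ∈ J := by
    have h : W * Z ^ 2 = X ^ 2 * W - (X + Z) * W * (X - Z) := by ring
    rw [h]; exact J.sub_mem hg2 (J.mul_mem_left _ hg5)
  refine ⟨?_, ?_, hXZ2, hYZ2, hZZ2, hWZ2⟩
  · -- Z ^ 2 ∉ J
    intro hmem
    classical
    set m1 : Fin 4 →₀ ℕ := Finsupp.single 0 2 with hm1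
    set m2 : Fin 4 →₀ ℕ := Finsupp.single 0 1 + Finsupp.single 2 1 with hm2
    set m3 : Fin 4 →₀ ℕ := Finsupp.single 2 2 with hm3
    have hpair2 : ∀ s t : Fin 4, (MvPowerSeries.X s : A) ^ 2 * MvPowerSeries.X t
        = MvPowerSeries.monomial (Finsupp.single s 2 + Finsupp.single t 1) 1 := by
      intro s t
      rw [MvPowerSeries.X_pow_eq, MvPowerSeries.X_def,
        MvPowerSeries.monomial_mul_monomial, mul_one]
    have hpair1 : ∀ s t : Fin 4, (MvPowerSeries.X s : A) * MvPowerSeries.X t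
        = MvPowerSeries.monomial (Finsupp.single s 1 + Finsupp.single t 1) 1 := by
      intro s t
      rw [MvPowerSeries.X_def, MvPowerSeries.X_def,
        MvPowerSeries.monomial_mul_monomial, mul_one]
    have key : ∀ f ∈ J, ∀ r : A,
        MvPowerSeries.coeff m1 (r * f) + MvPowerSeries.coeff m2 (r * f)
          + MvPowerSeries.coeff m3 (r * f) = 0 := by
      intro f hf
      induction hf using Submodule.span_induction with
      | mem g hg =>
        intro r
        simp only [Set.mem_insert_iff, Set.mem_singleton_iff] at hg
        rcases hg with h | h | h | h | h
        · have hmon : g = MvPowerSeries.monomial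
              (Finsupp.single 0 2 + Finsupp.single 2 1) 1 := by
            rw [h]; exact hpair2 0 2
          rw [hmon]
          rw [aux_coeff_zero r (aux_not_le 2 (by
            simp [hm1, Finsupp.single_apply]))]
          rw [aux_coeff_zero r (aux_not_le 0 (by
            simp [hm2, Finsupp.single_apply]))]
          rw [aux_coeff_zero r (aux_not_le 0 (by
            simp [hm3, Finsupp.single_apply]))]
          ring
        · have hmon : g = MvPowerSeries.monomial
              (Finsupp.single 0 2 + Finsupp.single 3 1) 1 := by
            rw [h]; exact hpair2 0 3
          rw [hmon]
          rw [aux_coeff_zero r (aux_not_le 3 (by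
            simp [hm1, Finsupp.single_apply]))]
          rw [aux_coeff_zero r (aux_not_le 3 (by
            simp [hm2, Finsupp.single_apply]))]
          rw [aux_coeff_zero r (aux_not_le 3 (by
            simp [hm3, Finsupp.single_apply]))]
          ring
        · have hmon : g = MvPowerSeries.monomial
              (Finsupp.single 1 1 + Finsupp.single 2 1) 1 := by
            rw [h]; exact hpair1 1 2
          rw [hmon]
          rw [aux_coeff_zero r (aux_not_le 1 (by
            simp [hm1, Finsupp.single_apply]))]
          rw [aux_coeff_zero r (aux_not_le 1 (by
            simp [hm2, Finsupp.single_apply]))]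
          rw [aux_coeff_zero r (aux_not_le 1 (by
            simp [hm3, Finsupp.single_apply]))]
          ring
        · have hmon : g = MvPowerSeries.monomial
              (Finsupp.single 1 1 + Finsupp.single 3 1) 1 := by
            rw [h]; exact hpair1 1 3
          rw [hmon]
          rw [aux_coeff_zero r (aux_not_le 1 (by
            simp [hm1, Finsupp.single_apply]))]
          rw [aux_coeff_zero r (aux_not_le 1 (by
            simp [hm2, Finsupp.single_apply]))]
          rw [aux_coeff_zero r (aux_not_le 1 (by
            simp [hm3, Finsupp.single_apply]))]
          ring
        · have hX : (X : A) = MvPowerSeries.monomial (Finsupp.single 0 1) 1 :=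
            MvPowerSeries.X_def 0
          have hZ : (Z : A) = MvPowerSeries.monomial (Finsupp.single 2 1) 1 :=
            MvPowerSeries.X_def 2
          have hsub1 : m1 - Finsupp.single 0 1 = Finsupp.single 0 1 := by
            ext i; fin_cases i <;> simp [hm1, Finsupp.tsub_apply, Finsupp.single_apply]
          have hsub2 : m2 - Finsupp.single 0 1 = Finsupp.single 2 1 := by
            ext i; fin_cases i <;> simp [hm2, Finsupp.tsub_apply, Finsupp.single_apply]
          have hsub3 : m2 - Finsupp.single 2 1 = Finsupp.single 0 1 := by
            ext i; fin_cases i <;> simp [hm2, Finsupp.tsub_apply, Finsupp.single_apply]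
          have hsub4 : m3 - Finsupp.single 2 1 = Finsupp.single 2 1 := by
            ext i; fin_cases i <;> simp [hm3, Finsupp.tsub_apply, Finsupp.single_apply]
          rw [h, mul_sub]
          simp only [map_sub]
          rw [hX, hZ]
          rw [aux_coeff_pos r (show Finsupp.single 0 1 ≤ m1 from
            Finsupp.le_def.mpr fun i => by
              fin_cases i <;> simp [hm1, Finsupp.single_apply])]
          rw [aux_coeff_pos r (show Finsupp.single 0 1 ≤ m2 from
            Finsupp.le_def.mpr fun i => by
              fin_cases i <;> simp [hm2, Finsupp.single_apply])]
          rw [aux_coeff_zero r (aux_not_le (m := m3) 0 (by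
            simp [hm3, Finsupp.single_apply]))]
          rw [aux_coeff_zero r (aux_not_le (m := m1) 2 (by
            simp [hm1, Finsupp.single_apply]))]
          rw [aux_coeff_pos r (show Finsupp.single 2 1 ≤ m2 from
            Finsupp.le_def.mpr fun i => by
              fin_cases i <;> simp [hm2, Finsupp.single_apply])]
          rw [aux_coeff_pos r (show Finsupp.single 2 1 ≤ m3 from
            Finsupp.le_def.mpr fun i => by
              fin_cases i <;> simp [hm3, Finsupp.single_apply])]
          rw [hsub1, hsub2, hsub3, hsub4]
          ring
      | zero => intro r; simp
      | add f g _ _ hf hg =>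
        intro r
        simp only [mul_add, map_add]
        linear_combination hf r + hg r
      | smul a f _ hf =>
        intro r
        rw [smul_eq_mul, ← mul_assoc]
        exact hf (r * a)
    have h1 := key _ hmem 1
    rw [one_mul] at h1
    have hZ2 : (Z : A) ^ 2 = MvPowerSeries.monomial m3 1 := by
      rw [hm3]; exact MvPowerSeries.X_pow_eq 2 2
    rw [hZ2] at h1
    have e1 : MvPowerSeries.coeff m1 (MvPowerSeries.monomial m3 (1 : k)) = 0 := by
      rw [MvPowerSeries.coeff_monomial, if_neg]
      intro hh
      have := congrArg (fun f => f (0 : Fin 4)) hh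
      simp [hm1, hm3, Finsupp.single_apply] at this
    have e2 : MvPowerSeries.coeff m2 (MvPowerSeries.monomial m3 (1 : k)) = 0 := by
      rw [MvPowerSeries.coeff_monomial, if_neg]
      intro hh
      have := congrArg (fun f => f (0 : Fin 4)) hh
      simp [hm2, hm3, Finsupp.single_apply] at this
    have e3 : MvPowerSeries.coeff m3 (MvPowerSeries.monomial m3 (1 : k)) = 1 :=
      MvPowerSeries.coeff_monomial_same m3 1
    rw [e1, e2, e3] at h1
    simp at h1
  · rw [Submodule.mem_colon]
    intro p hp
    induction hp using Submodule.span_induction with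
    | mem g hg =>
      simp only [Set.mem_insert_iff, Set.mem_singleton_iff] at hg
      rcases hg with h | h | h | h <;> rw [h, smul_eq_mul, mul_comm] <;> assumption
    | zero => rw [smul_zero]; exact J.zero_mem
    | add f g _ _ hf hg => rw [smul_add]; exact J.add_mem hf hg
    | smul a f _ hf => rw [smul_comm]; exact J.smul_mem a hf
end

section
/- Let k be a field of characteristic different from 2 and let P = k[X,Y,Z,W] be the polynomial ring in four variables. Let I be the ideal generated by {X²Z, X²W, YZ, YW}, and let J be the ideal generated by all 2×2 minors of the 4×4 Jacobian matrix (∂fᵢ/∂v)ᵢ, where (f₁,f₂,f₃,f₄) = (X²Z, X²W, YZ, YW) and v ranges over X, Y, Z, W. Then I + J = I + (X⁴, X²Y, XZ², XZW, XW², Y²), i.e., modulo I the Jacobian ideal equals the ideal generated by the images of X⁴, X²Y, XZ², XZW, XW², Y². -/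
/-!
Put `M = (X², Y)` and `N = (Z, W)`, so that `I = MN` and `S = (X⁴, X²Y, XZ², XZW, XW², Y²)`
is `M² + XN²`. Every entry of the Jacobian lies in `M + N`, and every entry outside the
`Y`-column (whose entries `Z`, `W` are the only troublesome ones) lies in `XN + M`. A `2×2`
minor takes its entries from two distinct columns, so each of its two terms lies in
`(XN + M)(M + N) ⊆ MN + XN² + M² = I + S`. Conversely, six of the minors are `X⁴`, `X²Y`, `Y²`,
`2XZ²`, `2XZW` and `2XW²`, and `2` is a unit.
-/

open MvPolynomial

noncomputable section

section JacobianMinor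

variable {R σ ι : Type*} [CommRing R]

def jacobianMinor (f : ι → MvPolynomial σ R) (r₁ r₂ : ι) (c₁ c₂ : σ) : MvPolynomial σ R :=
  pderiv c₁ (f r₁) * pderiv c₂ (f r₂) - pderiv c₂ (f r₁) * pderiv c₁ (f r₂)

def jacobianMinorIdeal (f : ι → MvPolynomial σ R) : Ideal (MvPolynomial σ R) :=
  Ideal.span {m | ∃ r₁ r₂ c₁ c₂, m = jacobianMinor f r₁ r₂ c₁ c₂}

theorem jacobianMinor_mem_jacobianMinorIdeal (f : ι → MvPolynomial σ R) (r₁ r₂ : ι)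
    (c₁ c₂ : σ) : jacobianMinor f r₁ r₂ c₁ c₂ ∈ jacobianMinorIdeal f :=
  Ideal.subset_span ⟨r₁, r₂, c₁, c₂, rfl⟩

theorem jacobianMinorIdeal_le_of_pderiv_mem {f : ι → MvPolynomial σ R}
    {A B K : Ideal (MvPolynomial σ R)} (c₀ : σ) (hA : ∀ r c, c ≠ c₀ → pderiv c (f r) ∈ A)
    (hB : ∀ r c, pderiv c (f r) ∈ B) (hAB : A * B ≤ K) : jacobianMinorIdeal f ≤ K := by
  have key : ∀ r r' c c', c ≠ c₀ →
      pderiv c (f r) * pderiv c' (f r') ∈ K ∧ pderiv c' (f r') * pderiv c (f r) ∈ K :=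
    fun r r' c c' hc ↦ ⟨hAB (Ideal.mul_mem_mul (hA r c hc) (hB r' c')),
      hAB (Ideal.mul_mem_mul_rev (hA r c hc) (hB r' c'))⟩
  rw [jacobianMinorIdeal, Ideal.span_le]
  rintro _ ⟨r₁, r₂, c₁, c₂, rfl⟩
  rcases eq_or_ne c₁ c₂ with rfl | h
  · simp [jacobianMinor]
  unfold jacobianMinor
  by_cases h₁ : c₁ = c₀
  · subst h₁
    exact K.sub_mem (key _ _ _ _ h.symm).2 (key _ _ _ _ h.symm).1
  · exact K.sub_mem (key _ _ _ _ h₁).1 (key _ _ _ _ h₁).2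

end JacobianMinor

namespace MonomialJacobian

variable (R : Type*) [CommRing R]

local notation "P" => MvPolynomial (Fin 4) R

def f : Fin 4 → P := ![X 0 ^ 2 * X 2, X 0 ^ 2 * X 3, X 1 * X 2, X 1 * X 3]

def idealI : Ideal P := Ideal.span {X 0 ^ 2 * X 2, X 0 ^ 2 * X 3, X 1 * X 2, X 1 * X 3}

def idealS : Ideal P :=
  Ideal.span {X 0 ^ 4, X 0 ^ 2 * X 1, X 0 * X 2 ^ 2, X 0 * X 2 * X 3, X 0 * X 3 ^ 2, X 1 ^ 2}

def idealM : Ideal P := Ideal.span {X 0 ^ 2, X 1}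

def idealN : Ideal P := Ideal.span {X 2, X 3}

theorem pderiv_f (r c : Fin 4) :
    pderiv c (f R r) = !![2 * X 0 * X 2, 0, X 0 ^ 2, 0;
                          2 * X 0 * X 3, 0, 0, X 0 ^ 2;
                          0, X 2, X 1, 0;
                          0, X 3, 0, X 1] r c := by
  fin_cases r <;> fin_cases c <;> simp [f, pderiv_X] <;> ring

theorem pderiv_f_mem_sup (r c : Fin 4) : pderiv c (f R r) ∈ idealM R ⊔ idealN R := by
  fin_cases r <;> fin_cases c <;> simp only [pderiv_f, idealM, idealN, mul_assoc] <;> simp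
  all_goals first
    | (apply Ideal.mem_sup_left; apply Ideal.subset_span; simp; done)
    | (apply Ideal.mem_sup_right; apply Ideal.subset_span; simp; done)
    | (apply Ideal.mem_sup_right; apply Ideal.mul_mem_left; apply Ideal.mul_mem_left
       apply Ideal.subset_span; simp)

theorem pderiv_f_mem_of_ne_one (r : Fin 4) {c : Fin 4} (hc : c ≠ 1) :
    pderiv c (f R r) ∈ Ideal.span {X 0} * idealN R ⊔ idealM R := by
  fin_cases r <;> fin_cases c <;> first | exact absurd rfl hc | skip
  all_goals simp only [pderiv_f, idealM, idealN, mul_assoc]; simp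
  all_goals first
    | (apply Ideal.mem_sup_right; apply Ideal.subset_span; simp; done)
    | (apply Ideal.mem_sup_left; apply Ideal.mul_mem_left
       exact Ideal.mul_mem_mul (Ideal.mem_span_singleton_self _) (Ideal.subset_span (by simp)))

theorem idealM_mul_idealN_le : idealM R * idealN R ≤ idealI R := by
  rw [idealM, idealN, Ideal.span_mul_span', idealI, Ideal.span_le]
  rintro _ ⟨a, ha, b, hb, rfl⟩
  rcases ha with rfl | rfl <;> rcases hb with rfl | rfl <;> exact Ideal.subset_span (by simp)

theorem idealM_mul_idealM_le : idealM R * idealM R ≤ idealS R := by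
  rw [idealM, Ideal.span_mul_span', idealS, Ideal.span_le]
  rintro _ ⟨a, ha, b, hb, rfl⟩
  rcases ha with rfl | rfl <;> rcases hb with rfl | rfl <;>
    exact Ideal.subset_span (by ring_nf; simp)

theorem span_X_mul_idealN_mul_idealN_le :
    Ideal.span {X 0} * idealN R * idealN R ≤ idealS R := by
  rw [idealN, Ideal.span_mul_span', Ideal.span_mul_span', idealS, Ideal.span_le]
  rintro _ ⟨_, ⟨x, hx, a, ha, rfl⟩, b, hb, rfl⟩
  rw [Set.mem_singleton_iff.1 hx]
  rcases ha with rfl | rfl <;> rcases hb with rfl | rfl <;>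
    exact Ideal.subset_span (by ring_nf; simp)

theorem sup_mul_sup_le :
    (Ideal.span {X 0} * idealN R ⊔ idealM R) * (idealM R ⊔ idealN R) ≤ idealI R ⊔ idealS R := by
  have hMN : idealM R * idealN R ≤ idealI R ⊔ idealS R :=
    le_sup_of_le_left (idealM_mul_idealN_le R)
  rw [Ideal.sup_mul, Ideal.mul_sup, Ideal.mul_sup]
  refine sup_le (sup_le ?_ ?_) (sup_le ?_ hMN)
  · exact (Ideal.mul_mono_left Ideal.mul_le_right).trans (mul_comm (idealM R) _ ▸ hMN)
  · exact le_sup_of_le_right (span_X_mul_idealN_mul_idealN_le R)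
  · exact le_sup_of_le_right (idealM_mul_idealM_le R)

theorem jacobianMinorIdeal_f_le : jacobianMinorIdeal (f R) ≤ idealI R ⊔ idealS R :=
  jacobianMinorIdeal_le_of_pderiv_mem 1 (fun r _ ↦ pderiv_f_mem_of_ne_one R r)
    (pderiv_f_mem_sup R) (sup_mul_sup_le R)

theorem idealS_le_jacobianMinorIdeal_f (h2 : IsUnit (2 : R)) :
    idealS R ≤ jacobianMinorIdeal (f R) := by
  have minor_mem (r₁ r₂ c₁ c₂ : Fin 4) {m : P} (h : jacobianMinor (f R) r₁ r₂ c₁ c₂ = m) :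
      m ∈ jacobianMinorIdeal (f R) :=
    h ▸ jacobianMinor_mem_jacobianMinorIdeal (f R) r₁ r₂ c₁ c₂
  have h2P : IsUnit (2 : P) := map_ofNat (C : R →+* P) 2 ▸ h2.map C
  rw [idealS, Ideal.span_le]
  rintro _ (rfl | rfl | rfl | rfl | rfl | rfl)
  · exact minor_mem 0 1 2 3 (by simp [jacobianMinor, pderiv_f]; ring)
  · exact minor_mem 0 3 2 3 (by simp [jacobianMinor, pderiv_f])
  · exact (Ideal.unit_mul_mem_iff_mem _ h2P).1
      (minor_mem 0 2 0 1 (by simp [jacobianMinor, pderiv_f]; ring))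
  · exact (Ideal.unit_mul_mem_iff_mem _ h2P).1
      (minor_mem 0 3 0 1 (by simp [jacobianMinor, pderiv_f]; ring))
  · exact (Ideal.unit_mul_mem_iff_mem _ h2P).1
      (minor_mem 1 3 0 1 (by simp [jacobianMinor, pderiv_f]; ring))
  · exact minor_mem 2 3 2 3 (by simp [jacobianMinor, pderiv_f]; ring)

end MonomialJacobian

end

open MonomialJacobian

/-- Let `k` be a field of characteristic `≠ 2`,
`P = k[X,Y,Z,W]`, `I = (X²Z, X²W, YZ, YW)`, and `J` the ideal generated by all
`2×2` minors of the Jacobian matrix of `(X²Z, X²W, YZ, YW)`. Then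
`I + J = I + (X⁴, X²Y, XZ², XZW, XW², Y²)`. -/
theorem stmt_10 (k : Type) [Field k] (hk : ringChar k ≠ 2) :
    let P := MvPolynomial (Fin 4) k
    let X : P := MvPolynomial.X 0
    let Y : P := MvPolynomial.X 1
    let Z : P := MvPolynomial.X 2
    let W : P := MvPolynomial.X 3
    let f : Fin 4 → P := ![X ^ 2 * Z, X ^ 2 * W, Y * Z, Y * W]
    let I : Ideal P := Ideal.span {X ^ 2 * Z, X ^ 2 * W, Y * Z, Y * W}
    let J : Ideal P := Ideal.span
      {m : P | ∃ r₁ r₂ c₁ c₂ : Fin 4,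
        m = pderiv c₁ (f r₁) * pderiv c₂ (f r₂) - pderiv c₂ (f r₁) * pderiv c₁ (f r₂)}
    I ⊔ J = I ⊔ Ideal.span
      {X ^ 4, X ^ 2 * Y, X * Z ^ 2, X * Z * W, X * W ^ 2, Y ^ 2} := by
  show idealI k ⊔ jacobianMinorIdeal (f k) = idealI k ⊔ idealS k
  have h2 : IsUnit (2 : k) := (Ring.two_ne_zero hk).isUnit
  exact le_antisymm (sup_le le_sup_left (jacobianMinorIdeal_f_le k))
    (sup_le le_sup_left ((idealS_le_jacobianMinorIdeal_f k h2).trans le_sup_right))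
end

section
/- Let k be a field and P = k[X,Y,Z,W] the polynomial ring in four variables. Let I be the ideal generated by {XY, YZ, ZX}, and let J be the ideal generated by all 2×2 minors of the 3×4 Jacobian matrix (∂fᵢ/∂v), where (f₁,f₂,f₃) = (XY, YZ, ZX) and v ranges over X, Y, Z, W. Then I + J = I + (X², Y², Z²), i.e., modulo I the Jacobian ideal equals the ideal generated by the images of X², Y², Z². -/
open MvPolynomial

set_option maxHeartbeats 1000000 in
/-- In `P = k[X,Y,Z,W]` with `I = (XY, YZ, ZX)` and `J` the
ideal generated by all `2×2` minors of the Jacobian matrix of `(XY, YZ, ZX)`,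
one has `I + J = I + (X², Y², Z²)`. -/
theorem stmt_16 (k : Type) [Field k] :
    let P := MvPolynomial (Fin 4) k
    let X : P := MvPolynomial.X 0
    let Y : P := MvPolynomial.X 1
    let Z : P := MvPolynomial.X 2
    let f : Fin 3 → P := ![X * Y, Y * Z, Z * X]
    let I : Ideal P := Ideal.span {X * Y, Y * Z, Z * X}
    let J : Ideal P := Ideal.span
      {m : P | ∃ (r₁ r₂ : Fin 3) (c₁ c₂ : Fin 4),
        m = pderiv c₁ (f r₁) * pderiv c₂ (f r₂) - pderiv c₂ (f r₁) * pderiv c₁ (f r₂)}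
    I ⊔ J = I ⊔ Ideal.span {X ^ 2, Y ^ 2, Z ^ 2} := by
  intro P X Y Z f I J
  have key : ∀ r c, (pderiv c (f r) : P) ∈ Ideal.span ({X, Y, Z} : Set P) := by
    intro r c
    fin_cases r <;> fin_cases c <;>
      simp only [X, Y, Z, f, Matrix.cons_val_zero, Matrix.cons_val_one, Matrix.head_cons,
        Matrix.cons_val_two, Matrix.tail_cons, pderiv_mul, pderiv_X,
        Pi.single_apply] <;>
      norm_num [Fin.ext_iff] <;>
      first
        | exact zero_mem _
        | exact Ideal.subset_span (by simp)
  have sq : Ideal.span ({X, Y, Z} : Set P) * Ideal.span ({X, Y, Z} : Set P) ≤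
      Ideal.span ({X^2, Y^2, Z^2} : Set P) ⊔ I := by
    rw [Ideal.span_mul_span, Ideal.span_le]
    rintro m hm
    simp only [Set.mem_mul, Set.mem_iUnion, Set.mem_singleton_iff, Set.mem_insert_iff,
      exists_prop] at hm
    obtain ⟨a, ha, b, hb, rfl⟩ := hm
    rw [← Ideal.span_union]
    rcases ha with rfl | rfl | rfl <;> rcases hb with rfl | rfl | rfl <;>
      exact Ideal.subset_span (by simp [← sq_abs, pow_two, mul_comm])
  apply le_antisymm
  · apply sup_le le_sup_left
    rw [Ideal.span_le]
    rintro m ⟨r₁, r₂, c₁, c₂, rfl⟩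
    have h1 := Ideal.mul_mem_mul (key r₁ c₁) (key r₂ c₂)
    have h2 := Ideal.mul_mem_mul (key r₁ c₂) (key r₂ c₁)
    have := sub_mem (sq h1) (sq h2)
    rwa [sup_comm] at this
  · apply sup_le le_sup_left
    rw [Ideal.span_le]
    have hX : X ^ 2 ∈ J := Ideal.subset_span ⟨0, 2, 1, 2, by
      simp [X, Y, Z, f, pderiv_mul, pderiv_X, Pi.single_apply, Fin.ext_iff]; ring⟩
    have hY : Y ^ 2 ∈ J := Ideal.subset_span ⟨0, 1, 0, 2, by
      simp [X, Y, Z, f, pderiv_mul, pderiv_X, Pi.single_apply, Fin.ext_iff]; ring⟩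
    have hZ : Z ^ 2 ∈ J := Ideal.subset_span ⟨1, 2, 1, 0, by
      simp [X, Y, Z, f, pderiv_mul, pderiv_X, Pi.single_apply, Fin.ext_iff]; ring⟩
    rintro m (rfl | rfl | rfl)
    · exact le_sup_right (α := Ideal P) hX
    · exact le_sup_right (α := Ideal P) hY
    · exact le_sup_right (α := Ideal P) hZ
end
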